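/- arXiv:math/0005004 — 3 statements merged into one kernel-verified Lean document; each statement's English description precedes it below -/
import Mathlib

section
/- Let 1 ≤ p < ∞, let 𝔖_0 ⊆ 𝔖_1 ⊆ ... ⊆ 𝔖_n be an increasing sequence of σ-algebras on a probability space with 𝔖_0 trivial, and let X_1,...,X_n be nonnegative random variables such that X_k is 𝔖_k-measurable and E[X_k^p] < ∞ for each k. Then E[(Σ_{k=1}^n X_k)^p] ≤ B(p) · max( Σ_{k=1}^n E[X_k^p], E[(Σ_{k=1}^n E[X_k | 𝔖_{k-1}])^p] ) for some constant B(p) depending only on p. -/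
open MeasureTheory ProbabilityTheory Finset

/-!
With `S = ∑ₖ Xₖ` and partial sums `Sₖ = ∑_{i<k} Xᵢ`, the convexity bound
`(s + x)ᵖ - sᵖ ≤ C (sᵖ⁻¹ x + xᵖ)`, `C = p 2ᵖ⁻¹`, telescopes to
`E Sᵖ ≤ C (∑ₖ E[Sₖᵖ⁻¹ Xₖ] + ∑ₖ E Xₖᵖ)`. Since `Sₖ` is measurable for the σ-algebra `𝒢ₖ` before
step `k`, the pull-out property replaces `Xₖ` by `Yₖ = E[Xₖ | 𝒢ₖ]` in the middle term, and
`∑ₖ Sₖᵖ⁻¹ Yₖ ≤ Sᵖ⁻¹ ∑ₖ Yₖ`. A weighted Young inequality with weight `2C` then bounds this by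
`E Sᵖ / (2C)` plus a multiple of `E (∑ₖ Yₖ)ᵖ`, and the `E Sᵖ` term is absorbed into the left side.
-/

namespace Real

lemma rpow_sub_one_mul_self {x p : ℝ} (hx : 0 ≤ x) (hp : p ≠ 0) : x ^ (p - 1) * x = x ^ p := by
  rw [← rpow_add_one' hx (by simpa using hp), sub_add_cancel]

/-- The tangent line of the convex function `t ↦ t ^ p` at `a + b` lies below its graph at `a`. -/
lemma add_rpow_le_rpow_add_mul {p a b : ℝ} (hp : 1 ≤ p) (ha : 0 ≤ a) (hb : 0 ≤ b) :
    (a + b) ^ p ≤ a ^ p + p * (a + b) ^ (p - 1) * b := by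
  rcases (add_nonneg ha hb).eq_or_lt with hab | hab
  · obtain ⟨rfl, rfl⟩ : a = 0 ∧ b = 0 := by constructor <;> linarith
    simp
  have bernoulli := one_add_mul_self_le_rpow_one_add (s := -b / (a + b))
    (by rw [neg_div, neg_le_neg_iff, div_le_one hab]; linarith) hp
  have h1 : 1 + -b / (a + b) = a / (a + b) := by field_simp; ring
  rw [h1, div_rpow ha hab.le, le_div_iff₀ (rpow_pos_of_pos hab p)] at bernoulli
  have hsplit : (a + b) ^ p = (a + b) ^ (p - 1) * (a + b) :=
    (rpow_sub_one_mul_self hab.le (by linarith)).symm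
  calc (a + b) ^ p = (1 + p * (-b / (a + b))) * (a + b) ^ p + p * (a + b) ^ (p - 1) * b := by
        rw [hsplit]; field_simp; ring
    _ ≤ a ^ p + p * (a + b) ^ (p - 1) * b := by linarith

lemma add_rpow_le_two_rpow_mul {q x y : ℝ} (hq : 0 ≤ q) (hx : 0 ≤ x) (hy : 0 ≤ y) :
    (x + y) ^ q ≤ 2 ^ q * (x ^ q + y ^ q) := by
  calc (x + y) ^ q ≤ (2 * max x y) ^ q := by
        gcongr; linarith [le_max_left x y, le_max_right x y]
    _ = 2 ^ q * max x y ^ q := mul_rpow zero_le_two (le_max_of_le_left hx)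
    _ ≤ 2 ^ q * (x ^ q + y ^ q) := by
        gcongr
        rcases max_cases x y with ⟨h, _⟩ | ⟨h, _⟩ <;> rw [h]
        · linarith [rpow_nonneg hy q]
        · linarith [rpow_nonneg hx q]

lemma add_rpow_sub_rpow_le {p s x : ℝ} (hp : 1 ≤ p) (hs : 0 ≤ s) (hx : 0 ≤ x) :
    (s + x) ^ p - s ^ p ≤ p * 2 ^ (p - 1) * (s ^ (p - 1) * x + x ^ p) := by
  have h2 := add_rpow_le_two_rpow_mul (q := p - 1) (by linarith) hs hx
  have hx' := rpow_sub_one_mul_self hx (by linarith : p ≠ 0)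
  calc (s + x) ^ p - s ^ p ≤ p * (s + x) ^ (p - 1) * x := by
        linarith [add_rpow_le_rpow_add_mul hp hs hx]
    _ ≤ p * (2 ^ (p - 1) * (s ^ (p - 1) + x ^ (p - 1))) * x := by gcongr
    _ = p * 2 ^ (p - 1) * (s ^ (p - 1) * x + x ^ p) := by rw [← hx']; ring

/-- A weighted Young inequality for the conjugate exponents `p / (p - 1)` and `p`. -/
lemma rpow_sub_one_mul_le {p c u v : ℝ} (hp : 1 ≤ p) (hc : 0 < c) (hu : 0 ≤ u) (hv : 0 ≤ v) :
    u ^ (p - 1) * v ≤ u ^ p / c + c ^ (p - 1) * v ^ p := by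
  have hp0 : p ≠ 0 := by linarith
  rcases le_total (c * v) u with h | h
  · calc u ^ (p - 1) * v ≤ u ^ (p - 1) * (u / c) := by gcongr; rwa [le_div_iff₀' hc]
      _ = u ^ p / c := by rw [← rpow_sub_one_mul_self hu hp0, mul_div_assoc]
      _ ≤ u ^ p / c + c ^ (p - 1) * v ^ p :=
          le_add_of_nonneg_right (mul_nonneg (rpow_nonneg hc.le _) (rpow_nonneg hv p))
  · calc u ^ (p - 1) * v ≤ (c * v) ^ (p - 1) * v := by gcongr
      _ = c ^ (p - 1) * v ^ p := by
          rw [mul_rpow hc.le hv, mul_assoc, rpow_sub_one_mul_self hv hp0]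
      _ ≤ u ^ p / c + c ^ (p - 1) * v ^ p :=
          le_add_of_nonneg_left (div_nonneg (rpow_nonneg hu p) hc.le)

lemma le_mul_add_rpow_mul_of_le_half_mul {p c a y A b : ℝ} (hp : p ≠ 0) (hc : 0 < c)
    (ha : a ≤ c / 2 * (y + A)) (hy : y ≤ a / c + c ^ (p - 1) * b) :
    a ≤ c * A + c ^ p * b := by
  have habsorb : c / 2 * (a / c + c ^ (p - 1) * b + A) = a / 2 + (c * A + c ^ p * b) / 2 := by
    rw [← rpow_sub_one_mul_self hc.le hp]; field_simp; ring
  have := mul_le_mul_of_nonneg_left (add_le_add_right hy A) (half_pos hc).le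
  linarith

end Real

lemma Finset.rpow_sum_le_mul_sum_partialSum {ι : Type*} [LinearOrder ι] {p : ℝ} (hp : 1 ≤ p)
    {x : ι → ℝ} (hx : ∀ i, 0 ≤ x i) (s : Finset ι) :
    (∑ i ∈ s, x i) ^ p ≤
      p * 2 ^ (p - 1) * ∑ k ∈ s, ((∑ i ∈ s with i < k, x i) ^ (p - 1) * x k + x k ^ p) := by
  induction s using Finset.induction_on_max with
  | empty => simp [Real.zero_rpow (by linarith : p ≠ 0)]
  | insert a s ha ih =>
    have ha' : a ∉ s := fun h => lt_irrefl a (ha a h)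
    have hlt : (insert a s).filter (· < a) = s := by
      rw [filter_insert, if_neg (lt_irrefl a), filter_true_of_mem ha]
    have hrest : ∑ k ∈ s, ((∑ i ∈ insert a s with i < k, x i) ^ (p - 1) * x k + x k ^ p) =
        ∑ k ∈ s, ((∑ i ∈ s with i < k, x i) ^ (p - 1) * x k + x k ^ p) :=
      sum_congr rfl fun k hk => by rw [filter_insert, if_neg (lt_asymm (ha k hk))]
    rw [sum_insert ha', sum_insert ha', hlt, hrest, mul_add, add_comm (x a)]
    have := Real.add_rpow_sub_rpow_le hp (sum_nonneg fun i (_ : i ∈ s) => hx i) (hx a)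
    linarith

section Integrals

variable {Ω : Type*} {m0 : MeasurableSpace Ω} {μ : Measure Ω}

lemma memLp_ofReal_iff_integrable_rpow {f : Ω → ℝ} {p : ℝ} (hp : 0 < p)
    (hf : AEStronglyMeasurable f μ) (hf0 : 0 ≤ᵐ[μ] f) :
    MemLp f (ENNReal.ofReal p) μ ↔ Integrable (fun ω => f ω ^ p) μ := by
  rw [← integrable_norm_rpow_iff hf (by simpa using hp) ENNReal.ofReal_ne_top,
    ENNReal.toReal_ofReal hp.le]
  refine integrable_congr ?_
  filter_upwards [hf0] with ω h
  rw [Real.norm_of_nonneg h]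

lemma integrable_rpow_sub_one_mul {f g : Ω → ℝ} {p : ℝ} (hp : 1 ≤ p)
    (hf : AEMeasurable f μ) (hg : AEMeasurable g μ) (hf0 : 0 ≤ᵐ[μ] f) (hg0 : 0 ≤ᵐ[μ] g)
    (hfp : Integrable (fun ω => f ω ^ p) μ) (hgp : Integrable (fun ω => g ω ^ p) μ) :
    Integrable (fun ω => f ω ^ (p - 1) * g ω) μ := by
  refine (hfp.add hgp).mono' ((hf.pow_const _).mul hg).aestronglyMeasurable ?_
  filter_upwards [hf0, hg0] with ω h1 h2
  rw [Real.norm_of_nonneg (mul_nonneg (Real.rpow_nonneg h1 _) h2)]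
  simpa using Real.rpow_sub_one_mul_le hp one_pos h1 h2

lemma integral_mul_condExp {m : MeasurableSpace Ω} (hm : m ≤ m0) [SigmaFinite (μ.trim hm)]
    {f g : Ω → ℝ} (hg : StronglyMeasurable[m] g) (hgf : Integrable (g * f) μ)
    (hf : Integrable f μ) :
    ∫ ω, g ω * μ[f|m] ω ∂μ = ∫ ω, g ω * f ω ∂μ := by
  calc ∫ ω, g ω * μ[f|m] ω ∂μ = ∫ ω, μ[g * f|m] ω ∂μ :=
        integral_congr_ae (condExp_mul_of_stronglyMeasurable_left hg hgf hf).symm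
    _ = ∫ ω, g ω * f ω ∂μ := integral_condExp hm

lemma integrable_rpow_finsetSum {ι : Type*} {f : ι → Ω → ℝ} {p : ℝ} (hp : 0 < p) (s : Finset ι)
    (hf : ∀ i ∈ s, AEStronglyMeasurable (f i) μ) (hf0 : ∀ i ∈ s, 0 ≤ᵐ[μ] f i)
    (hfp : ∀ i ∈ s, Integrable (fun ω => f i ω ^ p) μ) :
    Integrable (fun ω => (∑ i ∈ s, f i ω) ^ p) μ := by
  have hLp := memLp_finsetSum s fun i hi =>
    (memLp_ofReal_iff_integrable_rpow hp (hf i hi) (hf0 i hi)).2 (hfp i hi)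
  refine (memLp_ofReal_iff_integrable_rpow hp hLp.1 ?_).1 hLp
  filter_upwards [(Filter.eventually_all_finset s).2 hf0] with ω h
  exact sum_nonneg h

lemma integrable_condExp_rpow {m : MeasurableSpace Ω} {f : Ω → ℝ} {p : ℝ} (hp : 1 ≤ p)
    (hf : AEStronglyMeasurable[m0] f μ) (hf0 : 0 ≤ᵐ[μ] f) (hfp : Integrable (fun ω => f ω ^ p) μ) :
    Integrable (fun ω => μ[f|m] ω ^ p) μ := by
  have hp0 : 0 < p := by linarith
  have hLp := ((memLp_ofReal_iff_integrable_rpow hp0 hf hf0).2 hfp).condExp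
    (m := m) (ENNReal.one_le_ofReal.2 hp)
  exact (memLp_ofReal_iff_integrable_rpow hp0 hLp.1 (condExp_nonneg hf0)).1 hLp

end Integrals

section Rosenthal

variable {Ω ι : Type*} {m0 : MeasurableSpace Ω} {μ : Measure Ω} [Fintype ι] [LinearOrder ι]
  {X : ι → Ω → ℝ} {p : ℝ}

lemma integral_rpow_sum_le (hp : 1 ≤ p) (hX0 : ∀ k ω, 0 ≤ X k ω)
    (hSp : Integrable (fun ω => (∑ k, X k ω) ^ p) μ)
    (hSX : ∀ k, Integrable (fun ω => (∑ i with i < k, X i ω) ^ (p - 1) * X k ω) μ)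
    (hXp : ∀ k, Integrable (fun ω => X k ω ^ p) μ) :
    ∫ ω, (∑ k, X k ω) ^ p ∂μ ≤ p * 2 ^ (p - 1) *
      (∑ k, ∫ ω, (∑ i with i < k, X i ω) ^ (p - 1) * X k ω ∂μ + ∑ k, ∫ ω, X k ω ^ p ∂μ) := by
  have hterm : ∀ k ∈ univ,
      Integrable (fun ω => (∑ i with i < k, X i ω) ^ (p - 1) * X k ω + X k ω ^ p) μ :=
    fun k _ => (hSX k).add (hXp k)
  calc ∫ ω, (∑ k, X k ω) ^ p ∂μ
      ≤ ∫ ω, p * 2 ^ (p - 1) *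
          ∑ k, ((∑ i with i < k, X i ω) ^ (p - 1) * X k ω + X k ω ^ p) ∂μ :=
        integral_mono hSp ((integrable_finsetSum _ hterm).const_mul _)
          fun ω => rpow_sum_le_mul_sum_partialSum hp (hX0 · ω) univ
    _ = _ := by
        rw [integral_const_mul, integral_finsetSum _ hterm, ← sum_add_distrib]
        congr 2 with k
        exact integral_add (hSX k) (hXp k)

lemma sum_integral_partialSum_rpow_mul_le (hp : 1 ≤ p) (hX0 : ∀ k ω, 0 ≤ X k ω)
    {Y : ι → Ω → ℝ} (hY0 : ∀ k, 0 ≤ᵐ[μ] Y k) {c : ℝ} (hc : 0 < c)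
    (hSY : ∀ k, Integrable (fun ω => (∑ i with i < k, X i ω) ^ (p - 1) * Y k ω) μ)
    (hSp : Integrable (fun ω => (∑ k, X k ω) ^ p) μ)
    (hTp : Integrable (fun ω => (∑ k, Y k ω) ^ p) μ) :
    ∑ k, ∫ ω, (∑ i with i < k, X i ω) ^ (p - 1) * Y k ω ∂μ ≤
      (∫ ω, (∑ k, X k ω) ^ p ∂μ) / c + c ^ (p - 1) * ∫ ω, (∑ k, Y k ω) ^ p ∂μ := by
  rw [← integral_finsetSum _ fun k _ => hSY k, ← integral_div, ← integral_const_mul,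
    ← integral_add (hSp.div_const c) (hTp.const_mul _)]
  refine integral_mono_ae (integrable_finsetSum _ fun k _ => hSY k)
    ((hSp.div_const c).add (hTp.const_mul _)) ?_
  filter_upwards [ae_all_iff.2 hY0] with ω hY
  have hS0 : 0 ≤ ∑ k, X k ω := sum_nonneg fun k _ => hX0 k ω
  calc ∑ k, (∑ i with i < k, X i ω) ^ (p - 1) * Y k ω
      ≤ ∑ k, (∑ k, X k ω) ^ (p - 1) * Y k ω := by
        refine sum_le_sum fun k _ => mul_le_mul_of_nonneg_right (Real.rpow_le_rpow
          (sum_nonneg fun i _ => hX0 i ω) ?_ (by linarith)) (hY k)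
        exact sum_le_sum_of_subset_of_nonneg (filter_subset _ _) fun i _ _ => hX0 i ω
    _ = (∑ k, X k ω) ^ (p - 1) * ∑ k, Y k ω := (mul_sum _ _ _).symm
    _ ≤ (∑ k, X k ω) ^ p / c + c ^ (p - 1) * (∑ k, Y k ω) ^ p :=
        Real.rpow_sub_one_mul_le hp hc hS0 (sum_nonneg fun k _ => hY k)

theorem integral_rpow_sum_le_rosenthal [IsFiniteMeasure μ] (hp : 1 ≤ p)
    {𝒢 : ι → MeasurableSpace Ω} (h𝒢 : ∀ k, 𝒢 k ≤ m0) (hX0 : ∀ k ω, 0 ≤ X k ω)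
    (hXm : ∀ k, Measurable (X k)) (hX𝒢 : ∀ i k, i < k → Measurable[𝒢 k] (X i))
    (hXp : ∀ k, Integrable (fun ω => X k ω ^ p) μ) :
    ∫ ω, (∑ k, X k ω) ^ p ∂μ ≤ (p * 2 ^ p + (p * 2 ^ p) ^ p) *
      max (∑ k, ∫ ω, X k ω ^ p ∂μ) (∫ ω, (∑ k, μ[X k|𝒢 k] ω) ^ p ∂μ) := by
  have hp0 : 0 < p := by linarith
  have hS0 : ∀ k ω, 0 ≤ ∑ i with i < k, X i ω := fun k ω => sum_nonneg fun i _ => hX0 i ω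
  have hS𝒢 : ∀ k, Measurable[𝒢 k] fun ω => ∑ i with i < k, X i ω := fun k =>
    Finset.measurable_sum _ fun i hi => hX𝒢 i k (mem_filter.1 hi).2
  have hSm : ∀ k, Measurable fun ω => ∑ i with i < k, X i ω := fun k =>
    (hS𝒢 k).mono (h𝒢 k) le_rfl
  have hsump : ∀ s : Finset ι, Integrable (fun ω => (∑ i ∈ s, X i ω) ^ p) μ := fun s =>
    integrable_rpow_finsetSum hp0 s (fun i _ => (hXm i).aestronglyMeasurable)
      (fun i _ => ae_of_all _ (hX0 i)) fun i _ => hXp i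
  have hY0 : ∀ k, 0 ≤ᵐ[μ] μ[X k|𝒢 k] := fun k => condExp_nonneg (ae_of_all _ (hX0 k))
  have hYp : ∀ k, Integrable (fun ω => μ[X k|𝒢 k] ω ^ p) μ := fun k =>
    integrable_condExp_rpow hp (hXm k).aestronglyMeasurable (ae_of_all _ (hX0 k)) (hXp k)
  have hTp : Integrable (fun ω => (∑ k, μ[X k|𝒢 k] ω) ^ p) μ :=
    integrable_rpow_finsetSum hp0 _ (fun k _ => integrable_condExp.1) (fun k _ => hY0 k)
      fun k _ => hYp k
  have hSX : ∀ k, Integrable (fun ω => (∑ i with i < k, X i ω) ^ (p - 1) * X k ω) μ := fun k =>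
    integrable_rpow_sub_one_mul hp (hSm k).aemeasurable (hXm k).aemeasurable
      (ae_of_all _ (hS0 k)) (ae_of_all _ (hX0 k)) (hsump _) (hXp k)
  have hSY : ∀ k, Integrable
      (fun ω => (∑ i with i < k, X i ω) ^ (p - 1) * μ[X k|𝒢 k] ω) μ := fun k =>
    integrable_rpow_sub_one_mul hp (hSm k).aemeasurable integrable_condExp.1.aemeasurable
      (ae_of_all _ (hS0 k)) (hY0 k) (hsump _) (hYp k)
  have hpredictable : ∀ k, ∫ ω, (∑ i with i < k, X i ω) ^ (p - 1) * X k ω ∂μ =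
      ∫ ω, (∑ i with i < k, X i ω) ^ (p - 1) * μ[X k|𝒢 k] ω ∂μ := fun k =>
    (integral_mul_condExp (h𝒢 k) ((hS𝒢 k).pow_const (p - 1)).stronglyMeasurable (hSX k)
      ((memLp_ofReal_iff_integrable_rpow hp0 (hXm k).aestronglyMeasurable
        (ae_of_all _ (hX0 k))).2 (hXp k) |>.integrable (ENNReal.one_le_ofReal.2 hp))).symm
  have hc : 0 < p * 2 ^ p := by positivity
  have htelescope := integral_rpow_sum_le hp hX0 (hsump univ) hSX hXp
  have hyoung := sum_integral_partialSum_rpow_mul_le hp hX0 hY0 hc hSY (hsump univ) hTp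
  rw [sum_congr rfl fun k _ => hpredictable k] at htelescope
  have hhalf : p * 2 ^ (p - 1) = p * 2 ^ p / 2 := by rw [Real.rpow_sub_one two_ne_zero]; ring
  rw [hhalf] at htelescope
  calc _ ≤ _ := Real.le_mul_add_rpow_mul_of_le_half_mul hp0.ne' hc htelescope hyoung
    _ ≤ _ := by
      rw [add_mul]
      gcongr
      exacts [le_max_left _ _, le_max_right _ _]

end Rosenthal

/-- Lemma 1 (Hitczenko): martingale version of Rosenthal's inequality for
nonnegative adapted sequences, upper-bound form. -/
theorem lemma1_hitczenko_rosenthal (p : ℝ) (hp : 1 ≤ p) :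
    ∃ B : ℝ, 0 < B ∧
      ∀ (Ω : Type) (m0 : MeasurableSpace Ω) (μ : Measure Ω) (_ : IsProbabilityMeasure μ)
        (n : ℕ) (𝔖 : Fin (n + 1) → MeasurableSpace Ω)
        (_ : Monotone 𝔖) (_ : 𝔖 0 = ⊥) (_ : ∀ i, 𝔖 i ≤ m0)
        (X : Fin n → Ω → ℝ)
        (_ : ∀ k ω, 0 ≤ X k ω)
        (_ : ∀ k : Fin n, Measurable[𝔖 k.succ] (X k))
        (_ : ∀ k, Integrable (fun ω => X k ω ^ p) μ),
        (∫ ω, (∑ k, X k ω) ^ p ∂μ)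
          ≤ B * max (∑ k, ∫ ω, X k ω ^ p ∂μ)
              (∫ ω, (∑ k, condExp (𝔖 k.castSucc) μ (X k) ω) ^ p ∂μ) := by
  have hp0 : 0 < p := by linarith
  refine ⟨p * 2 ^ p + (p * 2 ^ p) ^ p, by positivity, ?_⟩
  intro Ω m0 μ _ n 𝔖 h𝔖 _ h𝔖m0 X hX0 hX hXp
  exact integral_rpow_sum_le_rosenthal hp (fun k => h𝔖m0 _) hX0
    (fun k => (hX k).mono (h𝔖m0 _) le_rfl)
    (fun i k hik => (hX i).mono (h𝔖 (Fin.succ_le_castSucc_iff.2 hik)) le_rfl) hXp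
end

section
/- Let (X_n)_{n≥1} be a sequence of nonnegative random variables, A_r = Σ_{n=1}^∞ E[X_n^r], B_γ = (Σ_{n=1}^∞ E[X_n^γ])^{1/γ}, with A_p < ∞ and B_γ < ∞. Then for all 1 ≤ γ < s < p, max(A_s, B_γ^s) ≤ (max(A_p, B_γ^p))^{s/p}. -/
open MeasureTheory ENNReal

/-- `A_r = Σ_n E[X_n^r]`, as an extended nonnegative real. -/
noncomputable def momSum {Ω : Type*} [MeasurableSpace Ω] (μ : Measure Ω)
    (X : ℕ → Ω → ℝ) (r : ℝ) : ℝ≥0∞ :=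
  ∑' n, ∫⁻ ω, ENNReal.ofReal (X n ω ^ r) ∂μ

/-!
Write `s = a γ + b p` with `a + b = 1`. Hölder's inequality, applied first to each integral
and then to the sum over `n`, gives `A_s ≤ A_γ ^ a * A_p ^ b`. With `M = max(A_p, B_γ^p)` we have
`A_γ = (B_γ^p)^(γ/p) ≤ M^(γ/p)` and `A_p ≤ M`, so `A_s ≤ M^((aγ + bp)/p) = M^(s/p)`;
the bound `B_γ^s = (B_γ^p)^(s/p) ≤ M^(s/p)` is immediate.
-/

namespace ENNReal

theorem tsum_rpow_mul_rpow_le {ι : Type*} (x y : ι → ℝ≥0∞) {a b : ℝ}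
    (ha : 0 ≤ a) (hb : 0 ≤ b) (hab : a + b = 1) :
    ∑' i, x i ^ a * y i ^ b ≤ (∑' i, x i) ^ a * (∑' i, y i) ^ b := by
  let _ : MeasurableSpace ι := ⊤
  have : MeasurableSingletonClass ι := ⟨fun _ => trivial⟩
  simpa only [lintegral_count] using
    lintegral_mul_norm_pow_le (μ := Measure.count) (measurable_from_top (f := x)).aemeasurable
      (measurable_from_top (f := y)).aemeasurable ha hb hab

theorem lintegral_rpow_convex_comb_le {α : Type*} [MeasurableSpace α] {μ : Measure α}
    {f : α → ℝ≥0∞} (hf : AEMeasurable f μ) {a b u v : ℝ}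
    (ha : 0 ≤ a) (hb : 0 ≤ b) (hab : a + b = 1) (hu : 0 ≤ u) (hv : 0 ≤ v) :
    ∫⁻ x, f x ^ (a * u + b * v) ∂μ ≤ (∫⁻ x, f x ^ u ∂μ) ^ a * (∫⁻ x, f x ^ v ∂μ) ^ b := by
  have hsplit : ∀ x, f x ^ (a * u + b * v) = (f x ^ u) ^ a * (f x ^ v) ^ b := fun x => by
    rw [rpow_add_of_nonneg _ _ (by positivity) (by positivity), ← rpow_mul, ← rpow_mul,
      mul_comm a, mul_comm b]
  simp_rw [hsplit]
  exact lintegral_mul_norm_pow_le (hf.pow_const u) (hf.pow_const v) ha hb hab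

theorem rpow_mul_rpow_le_max_rpow (x y : ℝ≥0∞) {a b γ p : ℝ} (ha : 0 ≤ a) (hb : 0 ≤ b)
    (hγ : 0 < γ) (hp : 0 < p) :
    x ^ a * y ^ b ≤ (max y ((x ^ (1 / γ)) ^ p)) ^ ((a * γ + b * p) / p) := by
  set M := max y ((x ^ (1 / γ)) ^ p)
  have hx : x ≤ M ^ (γ / p) :=
    calc x = ((x ^ (1 / γ)) ^ p) ^ (γ / p) := by
          rw [← rpow_mul, ← rpow_mul, mul_div_cancel₀ _ hp.ne', one_div_mul_cancel hγ.ne',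
            rpow_one]
      _ ≤ M ^ (γ / p) := rpow_le_rpow (le_max_right _ _) (by positivity)
  calc x ^ a * y ^ b ≤ (M ^ (γ / p)) ^ a * M ^ b :=
        mul_le_mul' (rpow_le_rpow hx ha) (rpow_le_rpow (le_max_left _ _) hb)
    _ = M ^ ((a * γ + b * p) / p) := by
        rw [← rpow_mul, ← rpow_add_of_nonneg _ _ (by positivity) hb]
        congr 1
        field_simp

theorem rpow_le_max_rpow (x y : ℝ≥0∞) {s p : ℝ} (hs : 0 ≤ s) (hp : 0 < p) :
    x ^ s ≤ (max y (x ^ p)) ^ (s / p) :=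
  calc x ^ s = (x ^ p) ^ (s / p) := by rw [← rpow_mul, mul_div_cancel₀ _ hp.ne']
    _ ≤ (max y (x ^ p)) ^ (s / p) := rpow_le_rpow (le_max_right _ _) (by positivity)

end ENNReal

section Moments

variable {Ω : Type*} [MeasurableSpace Ω] {μ : Measure Ω} {X : ℕ → Ω → ℝ}

theorem momSum_eq_tsum_lintegral_rpow (hnn : ∀ n ω, 0 ≤ X n ω) {r : ℝ} (hr : 0 ≤ r) :
    momSum μ X r = ∑' n, ∫⁻ ω, ENNReal.ofReal (X n ω) ^ r ∂μ := by
  simp only [momSum, ENNReal.ofReal_rpow_of_nonneg (hnn _ _) hr]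

/-- Lyapunov's inequality for the moment sums: `r ↦ log A_r` is convex on `[0, ∞)`. -/
theorem momSum_convex_comb_le (hnn : ∀ n ω, 0 ≤ X n ω) (hmeas : ∀ n, Measurable (X n))
    {a b u v : ℝ} (ha : 0 ≤ a) (hb : 0 ≤ b) (hab : a + b = 1) (hu : 0 ≤ u) (hv : 0 ≤ v) :
    momSum μ X (a * u + b * v) ≤ momSum μ X u ^ a * momSum μ X v ^ b := by
  simp only [momSum_eq_tsum_lintegral_rpow hnn, hu, hv, (by positivity : 0 ≤ a * u + b * v)]
  calc _ ≤ ∑' n, (∫⁻ ω, ENNReal.ofReal (X n ω) ^ u ∂μ) ^ a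
          * (∫⁻ ω, ENNReal.ofReal (X n ω) ^ v ∂μ) ^ b :=
        ENNReal.tsum_le_tsum fun n => ENNReal.lintegral_rpow_convex_comb_le
          (hmeas n).ennreal_ofReal.aemeasurable ha hb hab hu hv
    _ ≤ _ := ENNReal.tsum_rpow_mul_rpow_le _ _ ha hb hab

end Moments

theorem lemma2_part3_general
    {Ω : Type*} [MeasurableSpace Ω] (μ : Measure Ω)
    (X : ℕ → Ω → ℝ) (hnn : ∀ n ω, 0 ≤ X n ω) (hmeas : ∀ n, Measurable (X n))
    (γ s p : ℝ) (hγ : 1 ≤ γ) (hγs : γ < s) (hsp : s < p) :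
    max (momSum μ X s) ((momSum μ X γ ^ (1 / γ)) ^ s)
      ≤ (max (momSum μ X p) ((momSum μ X γ ^ (1 / γ)) ^ p)) ^ (s / p) := by
  have hγ0 : 0 < γ := by linarith
  have hpγ : 0 < p - γ := by linarith
  set a := (p - s) / (p - γ)
  set b := (s - γ) / (p - γ)
  have ha : 0 ≤ a := div_nonneg (by linarith) hpγ.le
  have hb : 0 ≤ b := div_nonneg (by linarith) hpγ.le
  have hab : a + b = 1 := by simp only [a, b]; field_simp; ring
  have hs : s = a * γ + b * p := by simp only [a, b]; field_simp; ring
  refine max_le ?_ (ENNReal.rpow_le_max_rpow _ _ (by linarith) (by linarith))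
  calc momSum μ X s ≤ momSum μ X γ ^ a * momSum μ X p ^ b := by
        rw [hs]; exact momSum_convex_comb_le hnn hmeas ha hb hab hγ0.le (by linarith)
    _ ≤ _ := by
        rw [hs]; exact ENNReal.rpow_mul_rpow_le_max_rpow _ _ ha hb hγ0 (by linarith)

/-- Lemma 2, part 3: `max(A_s, B_γ^s) ≤ (max(A_p, B_γ^p))^{s/p}`. -/
theorem lemma2_part3
    {Ω : Type*} [MeasurableSpace Ω] (μ : Measure Ω) [IsProbabilityMeasure μ]
    (X : ℕ → Ω → ℝ) (hnn : ∀ n ω, 0 ≤ X n ω) (hmeas : ∀ n, Measurable (X n))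
    (γ s p : ℝ) (hγ : 1 ≤ γ) (hγs : γ < s) (hsp : s < p)
    (hAp : momSum μ X p ≠ ⊤) (hBγ : momSum μ X γ ≠ ⊤) :
    max (momSum μ X s) ((momSum μ X γ ^ (1 / γ)) ^ s)
      ≤ (max (momSum μ X p) ((momSum μ X γ ^ (1 / γ)) ^ p)) ^ (s / p) :=
  lemma2_part3_general μ X hnn hmeas γ s p hγ hγs hsp
end

section
/- Let X_1,...,X_n be i.i.d. random variables with values in a measurable space S, 1 ≤ k ≤ m-1, p ≥ 1, and let Y : S^m → ℝ be a nonnegative symmetric function with E[Y(X_1,...,X_m)^p] < ∞. Then Σ_{k+1≤i_{k+1}<...<i_m≤n} E[(Σ_{1≤i_1<...<i_k≤i_{k+1}-1} E[Y(X_{i_1},...,X_{i_m}) | X_{i_{k+1}},...,X_{i_m}])^p] ≥ A(p,m) · n^{p·k + (m-k)} · E[(E[Y(X_1,...,X_m) | X_{k+1},...,X_m])^p] for some constant A(p,m) > 0 and all n ≥ 2m, say. -/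
/-!
Given `X_h`, the variables `X_g` with `g` disjoint from `h` are independent of `X_h` and have the
product law `ν^k`, so every conditional expectation in the inner sum equals `F(X_h)` with
`F t = ∫ Y(u, t) dν^k(u)`. Hence the `h`-th term is `N(h)^p E[F^p]`, where `N(h)` counts the
increasing `k`-tuples below `h₀`, and the conditional expectation on the left is `F(X_{k+1..m})`.
What remains is counting: splitting `[n/2, n)` into `m - k` blocks gives `≳ n^(m-k)` increasing
tuples `h` with `h₀ ≥ n/2`, and splitting `[0, h₀)` into `k` blocks gives `N(h) ≳ n^k` for each.
-/

open MeasureTheory ProbabilityTheory Finset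

/-- The symmetric statistic `T_n = Σ_{1 ≤ i_1 < ... < i_m ≤ n} Y(X_{i_1},...,X_{i_m})`,
where the sum ranges over strictly increasing index tuples. -/
noncomputable def symStat {Ω S : Type*} {n m : ℕ} (X : Fin n → Ω → S)
    (Y : (Fin m → S) → ℝ) (ω : Ω) : ℝ :=
  ∑ g ∈ Finset.univ.filter (fun g : Fin m → Fin n => ∀ a b : Fin m, a < b → g a < g b),
    Y (fun j => X (g j) ω)

/-- The σ-algebra `σ(X_i : I i)` generated by a subfamily of random variables. -/
def sigmaOf {Ω S ι : Type*} [MeasurableSpace S] (X : ι → Ω → S) (I : ι → Prop) :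
    MeasurableSpace Ω :=
  ⨆ i, ⨆ _ : I i, MeasurableSpace.comap (X i) inferInstance

section FinAppend

variable {α : Type*} {k r : ℕ}

theorem Fin.comp_append {β : Type*} (f : α → β) (u : Fin k → α) (v : Fin r → α) :
    (fun i => f (Fin.append u v i)) = Fin.append (fun a => f (u a)) (fun b => f (v b)) := by
  funext i
  cases i using Fin.addCases <;> simp

theorem Fin.append_injective_of_lt [Preorder α] {u : Fin k → α} {v : Fin r → α}
    (hu : StrictMono u) (hv : StrictMono v) (hr : 0 < r) (huv : ∀ a, u a < v ⟨0, hr⟩) :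
    (Fin.append u v).Injective :=
  Fin.append_injective_iff.2 ⟨hu.injective, hv.injective,
    fun a b => ((huv a).trans_le (hv.monotone (Nat.zero_le b))).ne⟩

theorem measurable_finAppend [MeasurableSpace α] :
    Measurable fun x : (Fin k → α) × (Fin r → α) => Fin.append x.1 x.2 := by
  refine measurable_pi_lambda _ fun i => ?_
  cases i using Fin.addCases <;> simp only [Fin.append_left, Fin.append_right] <;> fun_prop

end FinAppend

theorem MeasureTheory.Integrable.of_integrable_rpow {α : Type*} [MeasurableSpace α]
    {μ : Measure α} [IsFiniteMeasure μ] {f : α → ℝ} (hf : AEStronglyMeasurable f μ) (hf0 : 0 ≤ f)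
    {p : ℝ} (hp : 1 ≤ p) (hint : Integrable (fun x => f x ^ p) μ) : Integrable f μ := by
  have hnorm : Integrable (fun x => ‖f x‖ ^ p) μ := by
    simpa only [Real.norm_of_nonneg (hf0 _)] using hint
  simpa only [Real.rpow_one, Real.norm_of_nonneg (hf0 _)] using
    integrable_norm_rpow_of_le hf zero_le_one (by linarith) hp hnorm

theorem sigmaOf_exists_eq_comap {Ω S ι κ : Type*} [MeasurableSpace S] (X : ι → Ω → S)
    (h : κ → ι) :
    sigmaOf X (fun i => ∃ j, h j = i)
      = MeasurableSpace.comap (fun ω j => X (h j) ω) MeasurableSpace.pi := by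
  simp only [MeasurableSpace.pi, MeasurableSpace.comap_iSup, MeasurableSpace.comap_comp]
  exact iSup_range (g := fun i => MeasurableSpace.comap (X i) inferInstance) (f := h)

namespace ProbabilityTheory

variable {Ω : Type*} [MeasurableSpace Ω] {μ : Measure Ω} {S : Type*} [MeasurableSpace S]
  {ν : Measure S}

theorem IndepFun.condExp_comp_ae_eq_integral_map [IsFiniteMeasure μ] {α β : Type*}
    [MeasurableSpace α] [MeasurableSpace β] {W : Ω → α} {V : Ω → β} (hW : Measurable W)
    (hV : Measurable V) (hWV : IndepFun W V μ) {Φ : α × β → ℝ} (hΦ : Measurable Φ)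
    (hint : Integrable (fun ω => Φ (W ω, V ω)) μ) :
    μ[fun ω => Φ (W ω, V ω) | MeasurableSpace.comap V inferInstance]
      =ᵐ[μ] fun ω => ∫ u, Φ (u, V ω) ∂(μ.map W) := by
  have hlaw : μ.map (fun ω => (W ω, V ω)) = (μ.map W).prod (μ.map V) :=
    (indepFun_iff_map_prod_eq_prod_map_map hW.aemeasurable hV.aemeasurable).1 hWV
  have hΦint : Integrable Φ ((μ.map W).prod (μ.map V)) := by
    rw [← hlaw]
    exact (integrable_map_measure hΦ.aestronglyMeasurable (hW.prodMk hV).aemeasurable).2 hint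
  set F : β → ℝ := fun v => ∫ u, Φ (u, v) ∂(μ.map W)
  have hF : StronglyMeasurable F := hΦ.stronglyMeasurable.integral_prod_left'
  have hFV : Integrable (fun ω => F (V ω)) μ :=
    (integrable_map_measure hF.aestronglyMeasurable hV.aemeasurable).1 hΦint.integral_prod_right
  refine (ae_eq_condExp_of_forall_setIntegral_eq hV.comap_le hint
    (fun _ _ _ => hFV.integrableOn) ?_
    (hF.comp_measurable (Measurable.of_comap_le le_rfl)).aestronglyMeasurable).symm
  rintro _ ⟨t, ht, rfl⟩ -
  calc ∫ ω in V ⁻¹' t, F (V ω) ∂μ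
      = ∫ v in t, F v ∂(μ.map V) :=
        (setIntegral_map ht hF.aestronglyMeasurable hV.aemeasurable).symm
    _ = ∫ x, Φ x ∂((μ.map W).prod ((μ.map V).restrict t)) :=
        (integral_prod_symm Φ (by rw [← Measure.restrict_univ (μ := μ.map W),
          Measure.prod_restrict]; exact hΦint.integrableOn)).symm
    _ = ∫ x in Prod.snd ⁻¹' t, Φ x ∂(μ.map fun ω => (W ω, V ω)) := by
        rw [hlaw, ← Set.univ_prod, ← Measure.prod_restrict, Measure.restrict_univ]
    _ = ∫ ω in V ⁻¹' t, Φ (W ω, V ω) ∂μ :=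
        setIntegral_map (measurable_snd ht) hΦ.aestronglyMeasurable (hW.prodMk hV).aemeasurable

section IndexedFamily

variable {ι : Type*} {X : ι → Ω → S}

theorem iIndepFun.indepFun_tuple (hX : ∀ i, Measurable (X i)) (hind : iIndepFun X μ)
    {κ κ' : Type*} [Fintype κ] [Fintype κ'] {e : κ → ι} {e' : κ' → ι}
    (hdisj : ∀ a b, e a ≠ e' b) :
    IndepFun (fun ω a => X (e a) ω) (fun ω b => X (e' b) ω) μ := by
  classical
  have hST : Disjoint (univ.image e) (univ.image e') := by
    simp only [disjoint_left, mem_image, mem_univ, true_and]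
    rintro _ ⟨a, rfl⟩ ⟨b, hb⟩
    exact hdisj a b hb.symm
  exact (hind.indepFun_finset _ _ hST hX).comp
    (measurable_pi_lambda _ fun a => measurable_pi_apply (⟨e a, by simp⟩ : univ.image e))
    (measurable_pi_lambda _ fun b => measurable_pi_apply (⟨e' b, by simp⟩ : univ.image e'))

variable [IsProbabilityMeasure μ]

theorem iIndepFun.map_tuple_eq_pi (hX : ∀ i, Measurable (X i)) (hind : iIndepFun X μ)
    (hν : ∀ i, μ.map (X i) = ν) {κ : Type*} [Fintype κ] {e : κ → ι} (he : e.Injective) :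
    μ.map (fun ω j => X (e j) ω) = Measure.pi fun _ => ν := by
  rw [(iIndepFun_iff_map_fun_eq_pi_map fun j => (hX (e j)).aemeasurable).1 (hind.precomp he)]
  simp only [hν]

theorem iIndepFun.condExp_append_ae_eq (hX : ∀ i, Measurable (X i)) (hind : iIndepFun X μ)
    (hν : ∀ i, μ.map (X i) = ν) {k r : ℕ} {g : Fin k → ι} {h : Fin r → ι}
    (hgh : (Fin.append g h).Injective) {Y : (Fin (k + r) → S) → ℝ} (hY : Measurable Y)
    (hYint : Integrable Y (Measure.pi fun _ => ν)) :
    μ[fun ω => Y fun i => X (Fin.append g h i) ω | sigmaOf X fun i => ∃ j, h j = i]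
      =ᵐ[μ] fun ω => ∫ u, Y (Fin.append u fun j => X (h j) ω) ∂(Measure.pi fun _ => ν) := by
  obtain ⟨hg, -, hdisj⟩ := Fin.append_injective_iff.1 hgh
  have hint : Integrable (fun ω => Y fun i => X (Fin.append g h i) ω) μ := by
    rw [← hind.map_tuple_eq_pi hX hν hgh] at hYint
    exact (integrable_map_measure hY.aestronglyMeasurable (by fun_prop)).1 hYint
  have hsplit : ∀ ω, (fun i => X (Fin.append g h i) ω)
      = Fin.append (fun a => X (g a) ω) (fun b => X (h b) ω) :=
    fun ω => Fin.comp_append (fun i => X i ω) g h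
  simp only [hsplit] at hint ⊢
  rw [sigmaOf_exists_eq_comap, ← hind.map_tuple_eq_pi hX hν hg]
  exact IndepFun.condExp_comp_ae_eq_integral_map (Φ := fun x => Y (Fin.append x.1 x.2))
    (by fun_prop) (by fun_prop) (hind.indepFun_tuple hX hdisj) (hY.comp measurable_finAppend) hint

theorem iIndepFun.integral_sum_condExp_append_rpow [SigmaFinite ν] (hX : ∀ i, Measurable (X i))
    (hind : iIndepFun X μ) (hν : ∀ i, μ.map (X i) = ν) {k r : ℕ} {h : Fin r → ι}
    (hh : h.Injective) {G : Finset (Fin k → ι)} (hG : ∀ g ∈ G, (Fin.append g h).Injective)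
    {Y : (Fin (k + r) → S) → ℝ} (hY : Measurable Y) (hY0 : 0 ≤ Y)
    (hYint : Integrable Y (Measure.pi fun _ => ν)) (p : ℝ) :
    ∫ ω, (∑ g ∈ G, μ[fun ω => Y fun i => X (Fin.append g h i) ω |
        sigmaOf X fun i => ∃ j, h j = i] ω) ^ p ∂μ
      = (#G : ℝ) ^ p * ∫ t, (∫ u, Y (Fin.append u t) ∂(Measure.pi fun _ => ν)) ^ p
          ∂(Measure.pi fun _ => ν) := by
  set F : (Fin r → S) → ℝ := fun t => ∫ u, Y (Fin.append u t) ∂(Measure.pi fun _ => ν)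
  have hF : Measurable F :=
    (hY.comp measurable_finAppend).stronglyMeasurable.integral_prod_left'.measurable
  have hsum : (fun ω => (∑ g ∈ G, μ[fun ω => Y fun i => X (Fin.append g h i) ω |
      sigmaOf X fun i => ∃ j, h j = i] ω) ^ p)
      =ᵐ[μ] fun ω => (#G : ℝ) ^ p * F (fun j => X (h j) ω) ^ p := by
    filter_upwards [(Filter.eventually_all_finset G).2 fun g hg =>
      hind.condExp_append_ae_eq hX hν (hG g hg) hY hYint] with ω hω
    rw [sum_congr rfl hω, sum_const, nsmul_eq_mul]
    exact Real.mul_rpow (Nat.cast_nonneg _) (integral_nonneg fun _ => hY0 _)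
  rw [integral_congr_ae hsum, integral_const_mul, ← hind.map_tuple_eq_pi hX hν hh,
    integral_map (by fun_prop) (hF.pow_const p).aestronglyMeasurable]

end IndexedFamily

theorem iIndepFun.integral_condExp_castLE_rpow [IsProbabilityMeasure μ] [SigmaFinite ν] {n : ℕ}
    {X : Fin n → Ω → S} (hX : ∀ i, Measurable (X i)) (hind : iIndepFun X μ)
    (hν : ∀ i, μ.map (X i) = ν) {k r : ℕ} (hn : k + r ≤ n) {Y : (Fin (k + r) → S) → ℝ}
    (hY : Measurable Y) (hY0 : 0 ≤ Y) (hYint : Integrable Y (Measure.pi fun _ => ν)) (p : ℝ)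
    {P : Fin n → Prop} (hP : ∀ i, P i ↔ k ≤ (i : ℕ) ∧ (i : ℕ) < k + r) :
    ∫ ω, (μ[fun ω => Y fun i => X (Fin.castLE hn i) ω | sigmaOf X P] ω) ^ p ∂μ
      = ∫ t, (∫ u, Y (Fin.append u t) ∂(Measure.pi fun _ => ν)) ^ p ∂(Measure.pi fun _ => ν) := by
  set g₀ : Fin k → Fin n := fun a => Fin.castLE hn (Fin.castAdd r a)
  set h₀ : Fin r → Fin n := fun j => Fin.castLE hn (Fin.natAdd k j)
  have happend : Fin.append g₀ h₀ = Fin.castLE hn := Fin.append_castAdd_natAdd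
  have hinj : (Fin.append g₀ h₀).Injective := by
    rw [happend]
    exact Fin.castLE_injective hn
  have hσ : sigmaOf X P = sigmaOf X fun i => ∃ j, h₀ j = i := by
    congr 1
    ext i
    rw [hP]
    refine ⟨fun hi => ⟨⟨i - k, by omega⟩, Fin.ext ?_⟩, ?_⟩
    · simp only [Fin.natAdd_mk, Fin.castLE_mk, h₀]
      omega
    · rintro ⟨j, rfl⟩
      simp [h₀]
  have := hind.integral_sum_condExp_append_rpow hX hν (Fin.append_injective_iff.1 hinj).2.1
    (G := {g₀}) (fun g hg => mem_singleton.1 hg ▸ hinj) hY hY0 hYint p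
  simpa only [sum_singleton, card_singleton, Nat.cast_one, Real.one_rpow, one_mul, happend,
    ← hσ] using this

end ProbabilityTheory

section BlockTuples

variable {n k : ℕ}

theorem add_mul_add_lt_add_mul {s q a t : ℕ} (ha : a < k) (ht : t < q) :
    s + a * q + t < s + k * q := by
  nlinarith

def blockTuple (s q : ℕ) (hn : s + k * q ≤ n) (t : Fin k → Fin q) : Fin k → Fin n :=
  fun a => ⟨s + a * q + t a, (add_mul_add_lt_add_mul a.isLt (t a).isLt).trans_le hn⟩

variable {s q : ℕ} {hn : s + k * q ≤ n}

theorem blockTuple_injective : (blockTuple s q hn).Injective := by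
  intro t t' htt'
  funext a
  have := congrArg Fin.val (congrFun htt' a)
  simp only [blockTuple] at this
  exact Fin.ext (by omega)

theorem blockTuple_strictMono (t : Fin k → Fin q) : StrictMono (blockTuple s q hn t) := by
  intro a b hab
  simp only [blockTuple, Fin.mk_lt_mk]
  have := add_mul_add_lt_add_mul (s := s) hab (t a).isLt
  have := Nat.le_add_right (s + b * q) (t b)
  omega

theorem le_blockTuple (t : Fin k → Fin q) (a : Fin k) : s ≤ blockTuple s q hn t a := by
  simp only [blockTuple]
  omega

theorem blockTuple_lt (t : Fin k → Fin q) (a : Fin k) : (blockTuple s q hn t a : ℕ) < s + k * q :=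
  add_mul_add_lt_add_mul a.isLt (t a).isLt

end BlockTuples

def strictMonoBelow {n : ℕ} (k : ℕ) (b : Fin n) : Finset (Fin k → Fin n) :=
  univ.filter fun g => (∀ a a', a < a' → g a < g a') ∧ ∀ a, g a < b

theorem pow_div_le_card_strictMonoBelow {n : ℕ} (k : ℕ) (b : Fin n) :
    (b / k : ℕ) ^ k ≤ #(strictMonoBelow k b) := by
  have hb : 0 + k * (b / k) ≤ n := by
    have := Nat.mul_div_le (b : ℕ) k
    omega
  calc (b / k : ℕ) ^ k = #(univ.image (blockTuple 0 (b / k) hb)) := by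
        rw [card_image_of_injective _ blockTuple_injective]
        simp
    _ ≤ _ := by
        refine card_le_card fun g hg => ?_
        obtain ⟨t, -, rfl⟩ := mem_image.1 hg
        refine mem_filter.2 ⟨mem_univ _, fun a b hab => blockTuple_strictMono t hab, fun a => ?_⟩
        have := blockTuple_lt (hn := hb) t a
        have := Nat.mul_div_le (b : ℕ) k
        rw [Fin.lt_def]
        omega

theorem div_four_mul_le_div_two_div {n c : ℕ} (hc : 0 < c) (hcn : 2 * c ≤ n) :
    (n : ℝ) / (4 * c) ≤ (n / 2 / c : ℕ) := by
  rw [Nat.div_div_eq_div_mul]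
  have hq : 1 ≤ n / (2 * c) := (Nat.one_le_div_iff (by omega)).2 hcn
  have hlt : n < 2 * (2 * c) * (n / (2 * c)) := by
    have := Nat.lt_mul_div_succ n (show 0 < 2 * c by omega)
    nlinarith
  rw [div_le_iff₀ (by positivity)]
  have : (n : ℝ) < 2 * (2 * c) * (n / (2 * c) : ℕ) := by exact_mod_cast hlt
  linarith

theorem div_rpow_le_sum_card_strictMonoBelow_rpow {n k r : ℕ} (hk : 0 < k) (hr : 0 < r)
    (hn : 2 * (k + r) ≤ n) {p : ℝ} (hp : 0 ≤ p) :
    ((n : ℝ) / (4 * (k + r))) ^ (p * k + r)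
      ≤ ∑ h ∈ univ.filter (fun h : Fin r → Fin n =>
            (∀ a b, a < b → h a < h b) ∧ k ≤ (h ⟨0, hr⟩ : ℕ)),
          (#(strictMonoBelow k (h ⟨0, hr⟩)) : ℝ) ^ p := by
  set x : ℝ := n / (4 * (k + r))
  have hx : 0 < x := by
    have : (0 : ℝ) < n := by exact_mod_cast (show 0 < n by omega)
    positivity
  have hx_le : ∀ c : ℕ, 0 < c → c ≤ k + r → x ≤ (n / 2 / c : ℕ) := by
    intro c hc hck
    have hck' : (4 * c : ℝ) ≤ 4 * (k + r) := by exact_mod_cast Nat.mul_le_mul_left 4 hck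
    exact (div_le_div_of_nonneg_left (Nat.cast_nonneg _) (by positivity) hck').trans
      (div_four_mul_le_div_two_div hc (by omega))
  set q := n / 2 / r
  have hsq : n / 2 + r * q ≤ n := by
    have : r * q ≤ n / 2 := Nat.mul_div_le (n / 2) r
    omega
  set H := blockTuple (n / 2) q hsq
  have hcount : ∀ t, (n / 2 / k) ^ k ≤ #(strictMonoBelow k (H t ⟨0, hr⟩)) := fun t =>
    (Nat.pow_le_pow_left (Nat.div_le_div_right (le_blockTuple t _)) k).trans
      (pow_div_le_card_strictMonoBelow k _)
  have hsub : univ.image H ⊆ univ.filter (fun h : Fin r → Fin n =>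
      (∀ a b, a < b → h a < h b) ∧ k ≤ (h ⟨0, hr⟩ : ℕ)) := by
    intro h hh
    obtain ⟨t, -, rfl⟩ := mem_image.1 hh
    refine mem_filter.2 ⟨mem_univ _, fun a b hab => blockTuple_strictMono t hab, ?_⟩
    have : n / 2 ≤ (H t ⟨0, hr⟩ : ℕ) := le_blockTuple t _
    omega
  calc x ^ (p * k + r) = (x ^ k) ^ p * x ^ r := by
        rw [Real.rpow_add hx, mul_comm p, Real.rpow_mul hx.le, Real.rpow_natCast,
          Real.rpow_natCast]
    _ ≤ (((n / 2 / k) ^ k : ℕ) : ℝ) ^ p * (q : ℝ) ^ r := by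
        push_cast
        gcongr
        · exact hx_le k hk (by omega)
        · exact hx_le r hr (by omega)
    _ = ∑ _t : Fin r → Fin q, (((n / 2 / k) ^ k : ℕ) : ℝ) ^ p := by
        simp [mul_comm]
    _ ≤ ∑ t, (#(strictMonoBelow k (H t ⟨0, hr⟩)) : ℝ) ^ p :=
        sum_le_sum fun t _ => by gcongr; exact_mod_cast hcount t
    _ = ∑ h ∈ univ.image H, (#(strictMonoBelow k (h ⟨0, hr⟩)) : ℝ) ^ p := by
        rw [sum_image fun _ _ _ _ h => blockTuple_injective h]
    _ ≤ _ := sum_le_sum_of_subset_of_nonneg hsub fun _ _ _ => by positivity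

/-- The lower-bound step (for conditional sums) in the proof of Theorem 1. -/
theorem lower_bound_conditional_sums
    (p : ℝ) (m k : ℕ) (hp : 1 ≤ p) (hk : 1 ≤ k) (hkm : k ≤ m - 1) :
    ∃ A : ℝ, 0 < A ∧
      ∀ (Ω S : Type) (_ : MeasurableSpace Ω) (_ : MeasurableSpace S)
        (μ : Measure Ω) (_ : IsProbabilityMeasure μ)
        (n : ℕ) (hn : 2 * m ≤ n) (X : Fin n → Ω → S)
        (_ : ∀ i, Measurable (X i))
        (_ : iIndepFun X μ)
        (_ : ∀ i j, Measure.map (X i) μ = Measure.map (X j) μ)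
        (Y : (Fin m → S) → ℝ) (_ : Measurable Y) (_ : ∀ x, 0 ≤ Y x)
        (_ : ∀ (π : Equiv.Perm (Fin m)) (x : Fin m → S), Y (x ∘ π) = Y x)
        (_ : Integrable (fun ω => (Y fun i => X (Fin.castLE (by omega : m ≤ n) i) ω) ^ p) μ),
        A * (n : ℝ) ^ (p * k + ((m : ℝ) - k)) *
            ∫ ω, (condExp (sigmaOf X (fun i => k ≤ (i : ℕ) ∧ (i : ℕ) < m)) μ
                (fun ω' => Y fun i => X (Fin.castLE (by omega : m ≤ n) i) ω') ω) ^ p ∂μ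
          ≤ ∑ h ∈ Finset.univ.filter (fun h : Fin (m - k) → Fin n =>
                (∀ a b, a < b → h a < h b) ∧ k ≤ (h ⟨0, by omega⟩ : ℕ)),
              ∫ ω, (∑ g ∈ Finset.univ.filter (fun g : Fin k → Fin n =>
                    (∀ a b, a < b → g a < g b) ∧ ∀ a, g a < h ⟨0, by omega⟩),
                  condExp (sigmaOf X (fun i => ∃ j, h j = i)) μ
                    (fun ω' => Y fun jm =>
                      X (Fin.append g h (Fin.cast (by omega : m = k + (m - k)) jm)) ω') ω) ^ p ∂μ := by
  have hm : (0 : ℝ) < m := by exact_mod_cast (by omega : 0 < m)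
  refine ⟨((4 * m : ℝ) ^ (p * k + ((m : ℝ) - k)))⁻¹, by positivity, ?_⟩
  intro Ω S _ _ μ _ n hn X hX hind hid Y hY hY0 _ hint
  set ν := μ.map (X ⟨0, by omega⟩)
  have hν : ∀ i, μ.map (X i) = ν := fun i => hid i _
  have : IsProbabilityMeasure ν := Measure.isProbabilityMeasure_map (hX _).aemeasurable
  set Y' : (Fin (k + (m - k)) → S) → ℝ := fun x => Y fun j => x (Fin.cast (by omega) j)
  have hY' : Measurable Y' := hY.comp (measurable_pi_lambda _ fun _ => measurable_pi_apply _)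
  have hY'int : Integrable Y' (Measure.pi fun _ => ν) := by
    rw [← hind.map_tuple_eq_pi hX hν (Fin.castLE_injective (by omega : k + (m - k) ≤ n))]
    exact (integrable_map_measure hY'.aestronglyMeasurable (by fun_prop)).2
      (hint.of_integrable_rpow (hY.comp (by fun_prop)).aestronglyMeasurable (fun _ => hY0 _) hp)
  have hcount := div_rpow_le_sum_card_strictMonoBelow_rpow hk (by omega : 0 < m - k)
    (by omega : 2 * (k + (m - k)) ≤ n) (by linarith : 0 ≤ p)
  rw [Nat.cast_sub (by omega : k ≤ m), add_sub_cancel] at hcount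
  set D := ∫ t, (∫ u, Y' (Fin.append u t) ∂(Measure.pi fun _ => ν)) ^ p ∂(Measure.pi fun _ => ν)
  calc _ = ((n : ℝ) / (4 * m)) ^ (p * k + ((m : ℝ) - k)) * D := by
        rw [Real.div_rpow (by positivity) (by positivity), div_eq_inv_mul]
        congr 1
        exact hind.integral_condExp_castLE_rpow hX hν (by omega) hY' (fun _ => hY0 _) hY'int p
          fun i => by omega
    _ ≤ _ * D := mul_le_mul_of_nonneg_right hcount
        (integral_nonneg fun _ => Real.rpow_nonneg (integral_nonneg fun _ => hY0 _) p)
    _ = _ := by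
        rw [sum_mul]
        refine sum_congr rfl fun h hh => ?_
        have hh_mono : StrictMono h := (mem_filter.1 hh).2.1
        refine (hind.integral_sum_condExp_append_rpow hX hν hh_mono.injective (fun g hg => ?_)
          hY' (fun _ => hY0 _) hY'int p).symm
        obtain ⟨-, hg_mono, hg_lt⟩ := mem_filter.1 hg
        exact Fin.append_injective_of_lt hg_mono hh_mono _ hg_lt
end
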